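/- Every interval graph is a Δ-disk graph: if G is the intersection graph of a finite family of closed intervals on the real line (distinct u, v adjacent iff their intervals intersect), then G admits a Δ-disk representation. -/

import Mathlib

private lemma aux_adj {Lu Ru Lv Rv : ℝ} (hLu : 0 < Lu) (hLv : 0 < Lv)
    (hRu : 0 < Ru) (hRv : 0 < Rv)
    (h3 : Lu ≤ Rv) (h4 : Lv ≤ Ru) :
    (Real.sqrt (Lu * Ru) - Real.sqrt (Lv * Rv))^2 ≤ (Lu + Ru) * (Lv + Rv) := by
  set yu := Real.sqrt (Lu * Ru) with hyu
  set yv := Real.sqrt (Lv * Rv) with hyv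
  have hyu0 : 0 ≤ yu := Real.sqrt_nonneg _
  have hyv0 : 0 ≤ yv := Real.sqrt_nonneg _
  have hyu2 : yu^2 = Lu * Ru := Real.sq_sqrt (by positivity)
  have hyv2 : yv^2 = Lv * Rv := Real.sq_sqrt (by positivity)
  rcases le_total yu yv with h | h
  · have e1 : (yu - yv)^2 ≤ yv^2 := by nlinarith
    have e2 : yv^2 ≤ Ru * Rv := by rw [hyv2]; nlinarith
    nlinarith
  · have e1 : (yu - yv)^2 ≤ yu^2 := by nlinarith
    have e2 : yu^2 ≤ Ru * Rv := by rw [hyu2]; nlinarith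
    nlinarith

private lemma aux_dis {Lu Ru Lv Rv : ℝ} (hLu : 0 < Lu) (hLv : 0 < Lv)
    (hRu : 0 < Ru) (hRv : 0 < Rv) (h1 : Lu ≤ Ru) (h2 : Lv ≤ Rv)
    (h7 : 7 * Ru ≤ Lv) :
    (Lu + Ru) * (Lv + Rv) < (Real.sqrt (Lu * Ru) - Real.sqrt (Lv * Rv))^2 := by
  set yu := Real.sqrt (Lu * Ru) with hyu
  set yv := Real.sqrt (Lv * Rv) with hyv
  have hyu0 : 0 ≤ yu := Real.sqrt_nonneg _
  have hyv0 : 0 ≤ yv := Real.sqrt_nonneg _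
  have hyu2 : yu^2 = Lu * Ru := Real.sq_sqrt (by positivity)
  have hyv2 : yv^2 = Lv * Rv := Real.sq_sqrt (by positivity)
  have hyuR : yu ≤ Ru := by
    calc yu = Real.sqrt (Lu * Ru) := hyu
    _ ≤ Real.sqrt (Ru * Ru) := Real.sqrt_le_sqrt (by nlinarith)
    _ = Ru := Real.sqrt_mul_self hRu.le
  have hyvR : yv ≤ Rv := by
    calc yv = Real.sqrt (Lv * Rv) := hyv
    _ ≤ Real.sqrt (Rv * Rv) := Real.sqrt_le_sqrt (by nlinarith)
    _ = Rv := Real.sqrt_mul_self hRv.le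
  have hprod : yu * yv ≤ Ru * Rv := mul_le_mul hyuR hyvR hyv0 hRu.le
  have p4 : 7 * (Ru * Rv) ≤ Lv * Rv := by nlinarith
  nlinarith [mul_pos hRu hRv, mul_le_mul h1 h2 hLv.le hRu.le,
    mul_le_mul_of_nonneg_right h1 hRv.le, mul_le_mul_of_nonneg_left h2 hRu.le]

private lemma aux_nonempty {E : Type*} [NormedAddCommGroup E] [NormedSpace ℝ E]
    (a b : E) (ra rb : ℝ) (hra : 0 ≤ ra) (hrb : 0 ≤ rb) (hs : 0 < ra + rb)
    (h : dist a b ≤ ra + rb) :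
    (Metric.closedBall a ra ∩ Metric.closedBall b rb).Nonempty := by
  refine ⟨a + (ra / (ra + rb)) • (b - a), ?_, ?_⟩
  · rw [Metric.mem_closedBall, dist_eq_norm, add_sub_cancel_left, norm_smul,
      Real.norm_eq_abs, abs_of_nonneg (by positivity), ← dist_eq_norm', div_mul_eq_mul_div,
      div_le_iff₀ hs]
    exact mul_le_mul_of_nonneg_left h hra
  · have e2 : (a + (ra / (ra + rb)) • (b - a)) - b = (ra / (ra + rb) - 1) • (b - a) := by
      rw [sub_smul, one_smul]; abel
    have ht1 : ra / (ra + rb) - 1 = -(rb / (ra + rb)) := by field_simp; ring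
    rw [Metric.mem_closedBall, dist_eq_norm, e2, ht1, norm_smul, Real.norm_eq_abs, abs_neg,
      abs_of_nonneg (by positivity), ← dist_eq_norm', div_mul_eq_mul_div, div_le_iff₀ hs]
    exact mul_le_mul_of_nonneg_left h hrb

/-- A Δ-disk representation of a simple graph `G`: each vertex `v` gets a
closed disk with center `c v = (x_v, y_v)`, `x_v > 0`, `y_v > 0`, and radius
`r v` with `max x_v y_v ≤ r v < √(x_v² + y_v²)` (the disk meets both axes but
misses the origin); distinct vertices are adjacent iff their disks intersect. -/
def IsDeltaDiskRep {V : Type*} (G : SimpleGraph V)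
    (c : V → EuclideanSpace ℝ (Fin 2)) (r : V → ℝ) : Prop :=
  (∀ v, 0 < c v 0) ∧ (∀ v, 0 < c v 1) ∧
  (∀ v, max (c v 0) (c v 1) ≤ r v) ∧ (∀ v, r v < dist (c v) 0) ∧
  ∀ u v, u ≠ v → (G.Adj u v ↔
    (Metric.closedBall (c u) (r u) ∩ Metric.closedBall (c v) (r v)).Nonempty)

/-- Every interval graph (intersection graph of a finite family of closed
intervals on the real line) is a Δ-disk graph. -/
theorem intervalGraph_is_deltaDiskGraph
    {V : Type*} [Fintype V] (G : SimpleGraph V) (l ρ : V → ℝ)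
    (hlρ : ∀ v, l v ≤ ρ v)
    (hG : ∀ u v : V, u ≠ v → (G.Adj u v ↔
      (Set.Icc (l u) (ρ u) ∩ Set.Icc (l v) (ρ v)).Nonempty)) :
    ∃ (c : V → EuclideanSpace ℝ (Fin 2)) (r : V → ℝ), IsDeltaDiskRep G c r := by
  classical
  set ε : ℝ := 1 + ∑ u : V, ∑ v : V, max 0 (Real.log 7 / (l v - ρ u)) with hεdef
  have hsum0 : (0:ℝ) ≤ ∑ u : V, ∑ v : V, max 0 (Real.log 7 / (l v - ρ u)) :=
    Finset.sum_nonneg fun u _ => Finset.sum_nonneg fun v _ => le_max_left _ _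
  have hεpos : 0 < ε := by rw [hεdef]; linarith
  set L : V → ℝ := fun v => Real.exp (ε * l v) with hLdef
  set R : V → ℝ := fun v => Real.exp (ε * ρ v) with hRdef
  have hLpos : ∀ v, 0 < L v := fun v => Real.exp_pos _
  have hRpos : ∀ v, 0 < R v := fun v => Real.exp_pos _
  have hLeR : ∀ u v, l u ≤ ρ v → L u ≤ R v := fun u v h =>
    Real.exp_le_exp.mpr (mul_le_mul_of_nonneg_left h hεpos.le)
  have hLR : ∀ v, L v ≤ R v := fun v => hLeR v v (hlρ v)
  have hgap : ∀ u v : V, ρ u < l v → 7 * R u ≤ L v := by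
    intro u v h
    have hg : 0 < l v - ρ u := by linarith
    have h1 : Real.log 7 / (l v - ρ u) ≤ ε := by
      have hle : max 0 (Real.log 7 / (l v - ρ u)) ≤
          ∑ u' : V, ∑ v' : V, max 0 (Real.log 7 / (l v' - ρ u')) := by
        calc max 0 (Real.log 7 / (l v - ρ u))
            ≤ ∑ v' : V, max 0 (Real.log 7 / (l v' - ρ u)) :=
              Finset.single_le_sum (f := fun v' => max 0 (Real.log 7 / (l v' - ρ u)))
                (fun i _ => le_max_left _ _) (Finset.mem_univ v)
          _ ≤ ∑ u' : V, ∑ v' : V, max 0 (Real.log 7 / (l v' - ρ u')) :=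
              Finset.single_le_sum
                (f := fun u' => ∑ v' : V, max 0 (Real.log 7 / (l v' - ρ u')))
                (fun i _ => Finset.sum_nonneg fun j _ => le_max_left _ _) (Finset.mem_univ u)
      calc Real.log 7 / (l v - ρ u) ≤ max 0 (Real.log 7 / (l v - ρ u)) := le_max_right _ _
        _ ≤ ∑ u' : V, ∑ v' : V, max 0 (Real.log 7 / (l v' - ρ u')) := hle
        _ ≤ ε := by rw [hεdef]; linarith
    have h2 : Real.log 7 ≤ ε * (l v - ρ u) := by
      rw [div_le_iff₀ hg] at h1; linarith
    have h3 : (7:ℝ) ≤ Real.exp (ε * (l v - ρ u)) := by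
      rw [← Real.exp_log (by norm_num : (0:ℝ) < 7)]
      exact Real.exp_le_exp.mpr h2
    have h4 : Real.exp (ε * (l v - ρ u)) * Real.exp (ε * ρ u) = Real.exp (ε * l v) := by
      rw [← Real.exp_add]; congr 1; ring
    have h5 := mul_le_mul_of_nonneg_right h3 (Real.exp_pos (ε * ρ u)).le
    rw [h4] at h5
    simpa [hLdef, hRdef] using h5
  set x : V → ℝ := fun v => (L v + R v) / 2 with hxdef
  set y : V → ℝ := fun v => Real.sqrt (L v * R v) with hydef
  have hxpos : ∀ v, 0 < x v := fun v => by
    have h1 := hLpos v; have h2 := hRpos v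
    simp only [hxdef]; positivity
  have hypos : ∀ v, 0 < y v := fun v => Real.sqrt_pos.mpr (mul_pos (hLpos v) (hRpos v))
  have hyx : ∀ v, y v ≤ x v := by
    intro v
    have h := Real.sqrt_le_sqrt (show L v * R v ≤ x v ^ 2 by
      simp only [hxdef]; nlinarith [sq_nonneg (L v - R v), hLpos v, hRpos v])
    rwa [Real.sqrt_sq (hxpos v).le] at h
  set c : V → EuclideanSpace ℝ (Fin 2) :=
    fun v => (WithLp.equiv 2 (Fin 2 → ℝ)).symm ![x v, y v] with hcdef
  have hc0 : ∀ v, c v 0 = x v := fun v => by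
    simp [hcdef, WithLp.equiv_symm_apply, PiLp.toLp_apply]
  have hc1 : ∀ v, c v 1 = y v := fun v => by
    simp [hcdef, WithLp.equiv_symm_apply, PiLp.toLp_apply]
  have hdist : ∀ u v, dist (c u) (c v) = Real.sqrt ((x u - x v)^2 + (y u - y v)^2) := by
    intro u v
    rw [EuclideanSpace.dist_eq]; congr 1; rw [Fin.sum_univ_two]
    simp [hcdef, WithLp.equiv_symm_apply, PiLp.toLp_apply, Real.dist_eq, sq_abs]
  refine ⟨c, x, fun v => by rw [hc0]; exact hxpos v, fun v => by rw [hc1]; exact hypos v,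
    fun v => by rw [hc0, hc1]; exact max_le le_rfl (hyx v), ?_, ?_⟩
  · intro v
    have h0 : dist (c v) (0 : EuclideanSpace ℝ (Fin 2)) = Real.sqrt (x v ^2 + y v ^2) := by
      rw [EuclideanSpace.dist_eq]; congr 1; rw [Fin.sum_univ_two]
      simp [hcdef, WithLp.equiv_symm_apply, PiLp.toLp_apply, Real.dist_eq, sq_abs]
    rw [h0]
    calc x v = Real.sqrt (x v^2) := (Real.sqrt_sq (hxpos v).le).symm
      _ < Real.sqrt (x v^2 + y v^2) := Real.sqrt_lt_sqrt (sq_nonneg _) (by nlinarith [hypos v])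
  · intro u v huv
    have hiff := hG u v huv
    have hdxy : dist (c u) (c v) ^ 2 = (x u - x v)^2 + (y u - y v)^2 := by
      rw [hdist]; exact Real.sq_sqrt (by positivity)
    have hs : 0 < x u + x v := by linarith [hxpos u, hxpos v]
    constructor
    · intro hadj
      obtain ⟨t, htu, htv⟩ := hiff.mp hadj
      rw [Set.mem_Icc] at htu htv
      have key : (y u - y v)^2 ≤ (L u + R u) * (L v + R v) := by
        simpa [hydef] using aux_adj (hLpos u) (hLpos v) (hRpos u) (hRpos v)
          (hLeR u v (le_trans htu.1 htv.2)) (hLeR v u (le_trans htv.1 htu.2))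
      have hdle : dist (c u) (c v) ≤ x u + x v := by
        have hsq : dist (c u) (c v)^2 ≤ (x u + x v)^2 := by
          rw [hdxy]; simp only [hxdef]; nlinarith [key]
        nlinarith [dist_nonneg (x := c u) (y := c v), hs]
      exact aux_nonempty (c u) (c v) (x u) (x v) (hxpos u).le (hxpos v).le hs hdle
    · intro hne
      by_contra hnadj
      have hdisj : ρ u < l v ∨ ρ v < l u := by
        by_contra hcon
        push_neg at hcon
        exact hnadj (hiff.mpr ⟨max (l u) (l v),
          Set.mem_Icc.mpr ⟨le_max_left _ _, max_le (hlρ u) hcon.1⟩,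
          Set.mem_Icc.mpr ⟨le_max_right _ _, max_le hcon.2 (hlρ v)⟩⟩)
      have hd := Metric.dist_le_add_of_nonempty_closedBall_inter_closedBall hne
      have key : (L u + R u) * (L v + R v) < (y u - y v)^2 := by
        rcases hdisj with h | h
        · simpa [hydef] using aux_dis (hLpos u) (hLpos v) (hRpos u) (hRpos v)
            (hLR u) (hLR v) (hgap u v h)
        · have h' := aux_dis (hLpos v) (hLpos u) (hRpos v) (hRpos u)
            (hLR v) (hLR u) (hgap v u h)
          simp only [hydef]
          nlinarith [h']
      have hsq : (x u + x v)^2 < dist (c u) (c v)^2 := by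
        rw [hdxy]; simp only [hxdef]; nlinarith [key]
      have : x u + x v < dist (c u) (c v) := by
        nlinarith [dist_nonneg (x := c u) (y := c v), hs]
      linarith
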